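/- arXiv:2210.06299 — 2 statements merged into one kernel-verified Lean document; each statement's English description precedes it below -/
import Mathlib

section
/- There is a linear bijection (rearrangement map) R from ℝ^{(a₁b₁)×(a₂b₂)} to ℝ^{(a₁a₂)×(b₁b₂)} such that for all A ∈ ℝ^{a₁×a₂} and B ∈ ℝ^{b₁×b₂}, R(A ⊗ B) = vec(A) · vec(B)ᵀ, and R preserves Frobenius norms. -/
open Kronecker Matrix

/-- Frobenius norm of a real matrix. -/
noncomputable def frobNorm {m n : Type*} [Fintype m] [Fintype n] (M : Matrix m n ℝ) : ℝ :=
  Real.sqrt (∑ i, ∑ j, (M i j) ^ 2)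

namespace Matrix

variable {m₁ m₂ n₁ n₂ : Type*}

/-- The Van Loan–Pitsianis rearrangement. Kronecker products are indexed by pairs here, so the
paper's row index `j₁b₁ + k₁` is the pair `(j₁, k₁)`. -/
def rearrange (R : Type*) [Semiring R] :
    Matrix (m₁ × n₁) (m₂ × n₂) R ≃ₗ[R] Matrix (m₁ × m₂) (n₁ × n₂) R where
  toFun W p q := W (p.1, q.1) (p.2, q.2)
  invFun M p q := M (p.1, q.1) (p.2, q.2)
  map_add' _ _ := rfl
  map_smul' _ _ := rfl
  left_inv _ := rfl
  right_inv _ := rfl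

@[simp]
theorem rearrange_apply {R : Type*} [Semiring R] (W : Matrix (m₁ × n₁) (m₂ × n₂) R)
    (p : m₁ × m₂) (q : n₁ × n₂) : rearrange R W p q = W (p.1, q.1) (p.2, q.2) :=
  rfl

theorem rearrange_kronecker {R : Type*} [Semiring R] (A : Matrix m₁ m₂ R) (B : Matrix n₁ n₂ R) :
    rearrange R (A ⊗ₖ B) = fun p q => A p.1 p.2 * B q.1 q.2 :=
  rfl

end Matrix

theorem frobNorm_eq_sqrt_sum_prod {m n : Type*} [Fintype m] [Fintype n] (M : Matrix m n ℝ) :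
    frobNorm M = √(∑ x : m × n, M x.1 x.2 ^ 2) := by
  rw [frobNorm, Fintype.sum_prod_type]

theorem frobNorm_rearrange {m₁ m₂ n₁ n₂ : Type*} [Fintype m₁] [Fintype m₂] [Fintype n₁]
    [Fintype n₂] (W : Matrix (m₁ × n₁) (m₂ × n₂) ℝ) :
    frobNorm (rearrange ℝ W) = frobNorm W := by
  simp only [frobNorm_eq_sqrt_sum_prod, rearrange_apply]
  congr 1
  exact Fintype.sum_equiv (Equiv.prodProdProdComm m₁ m₂ n₁ n₂) _ _ fun _ => rfl

/-- There is a linear bijection (rearrangement map) `R : ℝ^{(a₁b₁)×(a₂b₂)} → ℝ^{(a₁a₂)×(b₁b₂)}`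
with `R(A ⊗ B) = vec(A) vec(B)ᵀ` for all `A, B`, and `R` preserves Frobenius norms. -/
theorem exists_rearrangement_map (a₁ a₂ b₁ b₂ : ℕ) :
    ∃ R : Matrix (Fin a₁ × Fin b₁) (Fin a₂ × Fin b₂) ℝ ≃ₗ[ℝ]
          Matrix (Fin a₁ × Fin a₂) (Fin b₁ × Fin b₂) ℝ,
      (∀ (A : Matrix (Fin a₁) (Fin a₂) ℝ) (B : Matrix (Fin b₁) (Fin b₂) ℝ),
        R (A ⊗ₖ B) = fun p q => A p.1 p.2 * B q.1 q.2) ∧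
      (∀ W, frobNorm (R W) = frobNorm W) :=
  ⟨rearrange ℝ, rearrange_kronecker, frobNorm_rearrange⟩
end

section
/- Any matrix W ∈ ℝ^{w₁×w₂} with w₁ = ∏_{k=1}^S a₁^{(k)} and w₂ = ∏_{k=1}^S a₂^{(k)} admits an exact SeKron representation: there exist ranks R₁,…,R_{S−1} and factor matrices A^{(k)}_{r₁⋯r_k} ∈ ℝ^{a₁^{(k)}×a₂^{(k)}} such that W = Σ_{r₁=1}^{R₁} A^{(1)}_{r₁} ⊗ Σ_{r₂=1}^{R₂} A^{(2)}_{r₁r₂} ⊗ ⋯ ⊗ Σ_{r_{S−1}} A^{(S−1)}_{r₁⋯r_{S−1}} ⊗ A^{(S)}_{r₁⋯r_{S−1}}. -/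
/-!
Split `W` along the first Kronecker factor into `a₁ 0 × a₂ 0` blocks, so that
`W = ∑_{p,q} E_{pq} ⊗ W_{pq}` with matrix units `E_{pq}`. Each block has one factor fewer, so by
induction it has a representation whose ranks `a₁ l * a₂ l` are the same for every block. The
first rank index then enumerates the pairs `(p, q)`, and every later factor depends on it only
through the block it represents.
-/

open Kronecker Matrix Finset

/-- Flat (block-matrix) Kronecker product of two matrices. -/
noncomputable def flatKron {a₁ a₂ b₁ b₂ : ℕ}
    (A : Matrix (Fin a₁) (Fin a₂) ℝ) (B : Matrix (Fin b₁) (Fin b₂) ℝ) :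
    Matrix (Fin (a₁ * b₁)) (Fin (a₂ * b₂)) ℝ :=
  fun i j => (A ⊗ₖ B) (i.divNat, i.modNat) (j.divNat, j.modNat)

/-- Sequence of Kronecker products `A^{(1)} ⊗ ⋯ ⊗ A^{(S)}` as a flat matrix. -/
noncomputable def seqKron : ∀ {S : ℕ} (a₁ a₂ : Fin S → ℕ),
    (∀ k, Matrix (Fin (a₁ k)) (Fin (a₂ k)) ℝ) →
    Matrix (Fin (∏ k, a₁ k)) (Fin (∏ k, a₂ k)) ℝ
  | 0, _, _, _ => fun _ _ => 1
  | _ + 1, a₁, a₂, A => fun i j =>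
      flatKron (A 0)
        (seqKron (fun k => a₁ k.succ) (fun k => a₂ k.succ) (fun k => A k.succ))
        (Fin.cast (Fin.prod_univ_succ a₁) i) (Fin.cast (Fin.prod_univ_succ a₂) j)

namespace Matrix

variable {l m n p α : Type*} [Fintype l] [Fintype n] [DecidableEq l] [DecidableEq n]
  [NonAssocSemiring α]

theorem sum_single_kronecker_comp_symm (M : Matrix (l × m) (n × p) α) :
    ∑ i, ∑ j, single i j (1 : α) ⊗ₖ (comp l n m p α).symm M i j = M := by
  ext ⟨i, x⟩ ⟨j, y⟩
  simp [Matrix.sum_apply, single_apply, ite_and]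

end Matrix

theorem flatKron_eq_reindex {a₁ a₂ b₁ b₂ : ℕ}
    (A : Matrix (Fin a₁) (Fin a₂) ℝ) (B : Matrix (Fin b₁) (Fin b₂) ℝ) :
    flatKron A B = reindex finProdFinEquiv finProdFinEquiv (A ⊗ₖ B) := rfl

theorem flatKron_sum_right {ι : Type*} [Fintype ι] {a₁ a₂ b₁ b₂ : ℕ}
    (A : Matrix (Fin a₁) (Fin a₂) ℝ) (B : ι → Matrix (Fin b₁) (Fin b₂) ℝ) :
    flatKron A (∑ s, B s) = ∑ s, flatKron A (B s) := by
  ext i j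
  simp [flatKron, Matrix.sum_apply, Finset.mul_sum]

theorem sum_flatKron_single {a₁ a₂ b₁ b₂ : ℕ} (W : Matrix (Fin (a₁ * b₁)) (Fin (a₂ * b₂)) ℝ) :
    ∑ i, ∑ j, flatKron (single i j 1)
      ((comp _ _ _ _ ℝ).symm (reindex finProdFinEquiv.symm finProdFinEquiv.symm W) i j) = W := by
  set e := reindexAddEquiv ℝ (finProdFinEquiv (m := a₁) (n := b₁))
    (finProdFinEquiv (m := a₂) (n := b₂))
  conv_rhs => rw [← e.apply_symm_apply W, ← Matrix.sum_single_kronecker_comp_symm (e.symm W)]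
  simp only [map_sum, e, coe_reindexAddEquiv, flatKron_eq_reindex]
  rfl

section SeKron

variable {S : ℕ}

noncomputable def kronCons (a₁ a₂ : Fin (S + 1) → ℕ) (A : Matrix (Fin (a₁ 0)) (Fin (a₂ 0)) ℝ)
    (B : Matrix (Fin (∏ k : Fin S, a₁ k.succ)) (Fin (∏ k : Fin S, a₂ k.succ)) ℝ) :
    Matrix (Fin (∏ k, a₁ k)) (Fin (∏ k, a₂ k)) ℝ :=
  (flatKron A B).submatrix (Fin.cast (Fin.prod_univ_succ a₁)) (Fin.cast (Fin.prod_univ_succ a₂))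

theorem seqKron_succ (a₁ a₂ : Fin (S + 1) → ℕ) (A : ∀ k, Matrix (Fin (a₁ k)) (Fin (a₂ k)) ℝ) :
    seqKron a₁ a₂ A = kronCons a₁ a₂ (A 0)
      (seqKron (fun k => a₁ k.succ) (fun k => a₂ k.succ) fun k => A k.succ) :=
  rfl

theorem seqKron_one (a₁ a₂ : Fin 1 → ℕ) (A : ∀ k, Matrix (Fin (a₁ k)) (Fin (a₂ k)) ℝ) :
    seqKron a₁ a₂ A = (A 0).submatrix (Fin.cast (Fin.prod_univ_one a₁))
      (Fin.cast (Fin.prod_univ_one a₂)) := by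
  ext i j
  refine (mul_one (A 0 _ _)).trans ?_
  congr 1 <;> ext <;> simp [Fin.divNat]

theorem kronCons_sum_right {ι : Type*} [Fintype ι] (a₁ a₂ : Fin (S + 1) → ℕ)
    (A : Matrix (Fin (a₁ 0)) (Fin (a₂ 0)) ℝ)
    (B : ι → Matrix (Fin (∏ k : Fin S, a₁ k.succ)) (Fin (∏ k : Fin S, a₂ k.succ)) ℝ) :
    kronCons a₁ a₂ A (∑ s, B s) = ∑ s, kronCons a₁ a₂ A (B s) := by
  ext i j
  simp [kronCons, flatKron_sum_right, Matrix.sum_apply]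

theorem exists_eq_sum_kronCons (a₁ a₂ : Fin (S + 1) → ℕ)
    (W : Matrix (Fin (∏ k, a₁ k)) (Fin (∏ k, a₂ k)) ℝ) :
    ∃ (C : Fin (a₁ 0 * a₂ 0) → Matrix (Fin (a₁ 0)) (Fin (a₂ 0)) ℝ)
      (V : Fin (a₁ 0 * a₂ 0) →
        Matrix (Fin (∏ k : Fin S, a₁ k.succ)) (Fin (∏ k : Fin S, a₂ k.succ)) ℝ),
      W = ∑ t, kronCons a₁ a₂ (C t) (V t) := by
  set W' := W.submatrix (Fin.cast (Fin.prod_univ_succ a₁).symm)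
    (Fin.cast (Fin.prod_univ_succ a₂).symm)
  set V := (comp _ _ _ _ ℝ).symm (reindex finProdFinEquiv.symm finProdFinEquiv.symm W')
  refine ⟨fun t => single (finProdFinEquiv.symm t).1 (finProdFinEquiv.symm t).2 1,
    fun t => V (finProdFinEquiv.symm t).1 (finProdFinEquiv.symm t).2, ?_⟩
  have hW' : ∑ t, flatKron (single (finProdFinEquiv.symm t).1 (finProdFinEquiv.symm t).2 1)
      (V (finProdFinEquiv.symm t).1 (finProdFinEquiv.symm t).2) = W' := by
    rw [← sum_flatKron_single W', ← finProdFinEquiv.sum_comp, Fintype.sum_prod_type]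
    simp only [Equiv.symm_apply_apply]
    rfl
  calc W = W'.submatrix (Fin.cast (Fin.prod_univ_succ a₁)) (Fin.cast (Fin.prod_univ_succ a₂)) := rfl
    _ = _ := by
      rw [← hW']
      ext i j
      simp only [kronCons, submatrix_apply, Matrix.sum_apply]

def SeKronRepresentable (a₁ a₂ : Fin (S + 1) → ℕ) (R : Fin S → ℕ)
    (W : Matrix (Fin (∏ k, a₁ k)) (Fin (∏ k, a₂ k)) ℝ) : Prop :=
  ∃ A : ∀ k : Fin (S + 1), (∀ l : Fin S, Fin (R l)) → Matrix (Fin (a₁ k)) (Fin (a₂ k)) ℝ,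
    (∀ (k : Fin (S + 1)) (r r' : ∀ l : Fin S, Fin (R l)),
      (∀ l : Fin S, (l : ℕ) ≤ (k : ℕ) → r l = r' l) → A k r = A k r') ∧
    W = ∑ r, seqKron a₁ a₂ (fun k => A k r)

theorem sekronRepresentable_of_fin_one (a₁ a₂ : Fin 1 → ℕ) (R : Fin 0 → ℕ)
    (W : Matrix (Fin (∏ k, a₁ k)) (Fin (∏ k, a₂ k)) ℝ) : SeKronRepresentable a₁ a₂ R W := by
  refine ⟨Fin.cons (fun _ => W.submatrix (Fin.cast (Fin.prod_univ_one a₁).symm)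
    (Fin.cast (Fin.prod_univ_one a₂).symm)) finZeroElim,
    fun _ r r' _ => by rw [Subsingleton.elim r r'], ?_⟩
  rw [Fintype.sum_unique, seqKron_one]
  rfl

theorem SeKronRepresentable.sum_kronCons {a₁ a₂ : Fin (S + 1 + 1) → ℕ} {R : Fin (S + 1) → ℕ}
    (C : Fin (R 0) → Matrix (Fin (a₁ 0)) (Fin (a₂ 0)) ℝ)
    {V : Fin (R 0) →
      Matrix (Fin (∏ k : Fin (S + 1), a₁ k.succ)) (Fin (∏ k : Fin (S + 1), a₂ k.succ)) ℝ}
    (hV : ∀ t, SeKronRepresentable (fun k => a₁ k.succ) (fun k => a₂ k.succ) (Fin.tail R) (V t)) :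
    SeKronRepresentable a₁ a₂ R (∑ t, kronCons a₁ a₂ (C t) (V t)) := by
  choose B hB_causal hB_sum using hV
  refine ⟨fun k r => Fin.cons (α := fun k => Matrix (Fin (a₁ k)) (Fin (a₂ k)) ℝ) (C (r 0))
    (fun k => B (r 0) k (Fin.tail r)) k, ?_, ?_⟩
  · intro k r r' h
    have h0 : r 0 = r' 0 := h 0 (Nat.zero_le _)
    cases k using Fin.cases with
    | zero => simp only [Fin.cons_zero, h0]
    | succ k =>
      simp only [Fin.cons_succ, h0]
      exact hB_causal _ k _ _ fun l hl => h l.succ (Nat.succ_le_succ hl)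
  · rw [← (Fin.consEquiv _).sum_comp, Fintype.sum_prod_type]
    refine Fintype.sum_congr _ _ fun t => ?_
    rw [hB_sum, kronCons_sum_right]
    exact Fintype.sum_congr _ _ fun s => by rw [seqKron_succ]; rfl

def blockRanks (a₁ a₂ : Fin (S + 1) → ℕ) (l : Fin S) : ℕ :=
  a₁ l.castSucc * a₂ l.castSucc

theorem sekronRepresentable_blockRanks : ∀ {S : ℕ} (a₁ a₂ : Fin (S + 1) → ℕ)
    (W : Matrix (Fin (∏ k, a₁ k)) (Fin (∏ k, a₂ k)) ℝ),
    SeKronRepresentable a₁ a₂ (blockRanks a₁ a₂) W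
  | 0, a₁, a₂, W => sekronRepresentable_of_fin_one a₁ a₂ _ W
  | _ + 1, a₁, a₂, W => by
    obtain ⟨C, V, rfl⟩ := exists_eq_sum_kronCons a₁ a₂ W
    exact SeKronRepresentable.sum_kronCons (R := blockRanks a₁ a₂) C fun t =>
      sekronRepresentable_blockRanks _ _ (V t)

end SeKron

/-- Exact SeKron representation (Theorem 1 of the paper, for matrices): any
`W ∈ ℝ^{w₁×w₂}` with `w₁ = ∏_k a₁^{(k)}`, `w₂ = ∏_k a₂^{(k)}` (here with `S+1` factors and
`S` rank indices) can be written as a nested sum of sequences of Kronecker products,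
where the `k`-th factor `A^{(k)}_{r₁⋯r_k}` depends only on the rank indices `r₁,…,r_k`
(the last factor depending on all of `r₁,…,r_S`, shared with the penultimate one).
Flattening the nested sums by multilinearity of `⊗`, this reads
`W = Σ_{r₁,…,r_S} A^{(1)}_{r₁} ⊗ A^{(2)}_{r₁r₂} ⊗ ⋯ ⊗ A^{(S+1)}_{r₁⋯r_S}`. -/
theorem exists_sekron_representation {S : ℕ} (a₁ a₂ : Fin (S + 1) → ℕ)
    (W : Matrix (Fin (∏ k, a₁ k)) (Fin (∏ k, a₂ k)) ℝ) :
    ∃ (R : Fin S → ℕ)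
      (A : ∀ k : Fin (S + 1), (∀ l : Fin S, Fin (R l)) →
        Matrix (Fin (a₁ k)) (Fin (a₂ k)) ℝ),
      (∀ (k : Fin (S + 1)) (r r' : ∀ l : Fin S, Fin (R l)),
        (∀ l : Fin S, (l : ℕ) ≤ (k : ℕ) → r l = r' l) → A k r = A k r') ∧
      W = ∑ r : ∀ l : Fin S, Fin (R l), seqKron a₁ a₂ (fun k => A k r) :=
  ⟨blockRanks a₁ a₂, sekronRepresentable_blockRanks a₁ a₂ W⟩
end
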